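/- arXiv:1004.0128 — 4 statements merged into one kernel-verified Lean document; each statement's English description precedes it below -/
import Mathlib

section
/- Let G be a group and H a subgroup. The pair H < G satisfies condition (ST) (i.e., for every finite subset C of G \ H there exists a finite subset E of H such that g₁hg₂ ∉ H for all h ∈ H \ E and all g₁, g₂ ∈ C) if and only if for every g ∈ G \ H the intersection H ∩ gHg⁻¹ is finite. -/
/-- Condition (ST) for a pair H < G is equivalent to almost malnormality of H in G. -/
theorem stmt_0 {G : Type*} [Group G] (H : Subgroup G) :
    (∀ C : Finset G, (↑C : Set G) ⊆ {g : G | g ∉ H} →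
      ∃ E : Finset G, (↑E : Set G) ⊆ (H : Set G) ∧
        ∀ h ∈ H, h ∉ E → ∀ g₁ ∈ C, ∀ g₂ ∈ C, g₁ * h * g₂ ∉ H) ↔
    (∀ g : G, g ∉ H → {h : G | h ∈ H ∧ g * h * g⁻¹ ∈ H}.Finite) := by
  classical
  constructor
  · intro hST g hg
    have hginv : g⁻¹ ∉ H := fun h => hg (by simpa using H.inv_mem h)
    obtain ⟨E, hEH, hE⟩ := hST {g, g⁻¹} (by
      intro x hx
      simp only [Finset.coe_insert, Finset.coe_singleton, Set.mem_insert_iff,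
        Set.mem_singleton_iff] at hx
      rcases hx with rfl | rfl
      · exact hg
      · exact hginv)
    apply Set.Finite.subset E.finite_toSet
    rintro h ⟨hH, hgH⟩
    by_contra hhE
    exact hE h hH hhE g (by simp) g⁻¹ (by simp) hgH
  · intro hAM C hC
    have key : ∀ g₁ ∈ C, ∀ g₂ ∈ C, {h : G | h ∈ H ∧ g₁ * h * g₂ ∈ H}.Finite := by
      intro g₁ h₁ g₂ h₂
      by_cases hne : {h : G | h ∈ H ∧ g₁ * h * g₂ ∈ H}.Nonempty
      · obtain ⟨h₀, h₀H, h₀g⟩ := hne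
        have hg₁ : g₁ ∉ H := hC h₁
        have fin := hAM g₁ hg₁
        apply Set.Finite.subset (fin.image (· * h₀))
        rintro h ⟨hH, hg⟩
        refine ⟨h * h₀⁻¹, ⟨H.mul_mem hH (H.inv_mem h₀H), ?_⟩, by group⟩
        have : g₁ * (h * h₀⁻¹) * g₁⁻¹ = (g₁ * h * g₂) * (g₁ * h₀ * g₂)⁻¹ := by group
        rw [this]
        exact H.mul_mem hg (H.inv_mem h₀g)
      · rw [Set.not_nonempty_iff_eq_empty] at hne
        rw [hne]; exact Set.finite_empty
    have fin : (⋃ g₁ ∈ (C : Set G), ⋃ g₂ ∈ (C : Set G),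
        {h : G | h ∈ H ∧ g₁ * h * g₂ ∈ H}).Finite :=
      Set.Finite.biUnion C.finite_toSet (fun g₁ h₁ =>
        Set.Finite.biUnion C.finite_toSet (fun g₂ h₂ => key g₁ h₁ g₂ h₂))
    refine ⟨fin.toFinset, ?_, ?_⟩
    · intro x hx
      simp only [Set.Finite.coe_toFinset, Set.mem_iUnion, Set.mem_setOf_eq] at hx
      obtain ⟨g₁, _, g₂, _, hxH, _⟩ := hx
      exact hxH
    · intro h hH hE g₁ hg₁ g₂ hg₂ hmem
      apply hE
      rw [Set.Finite.mem_toFinset]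
      exact Set.mem_biUnion hg₁ (Set.mem_biUnion hg₂ ⟨hH, hmem⟩)
end

section
/- If H is a malnormal subgroup of a group G₁ (i.e., H ∩ gHg⁻¹ = {1} for all g ∈ G₁ \ H), then H is malnormal in the free product G₁ * G₂ for any group G₂. -/
/-!
A nontrivial `a ∈ G₁` can be conjugated back into `G₁` inside `G₁ ∗ G₂` only by an element of
`G₁`: after absorbing a final letter from `G₁` into `a`, the conjugator is a reduced word `w` not
ending in `G₁`, and then `w a w⁻¹` is again a reduced word, of length `2 |w| + 1`, so `w` is empty.
Hence a `g ∉ H` with `g h g⁻¹ ∈ H` for some `1 ≠ h ∈ H` lies in `G₁ \ H`, contradicting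
malnormality of `H` in `G₁`.
-/

open Monoid

universe u v

namespace Monoid.CoprodI.Word

variable {ι : Type*} {M : ι → Type*} [∀ i, Monoid (M i)]

theorem prod_injective [DecidableEq ι] [∀ i, DecidableEq (M i)] :
    Function.Injective (prod : Word M → CoprodI M) :=
  equiv.symm.injective

def append (u v : Word M)
    (h : ∀ l ∈ u.toList.getLast?, ∀ l' ∈ v.toList.head?, l.1 ≠ l'.1) : Word M where
  toList := u.toList ++ v.toList
  ne_one l hl := (List.mem_append.1 hl).elim (u.ne_one l) (v.ne_one l)
  chain_ne := u.chain_ne.append v.chain_ne h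

theorem prod_append (u v : Word M)
    (h : ∀ l ∈ u.toList.getLast?, ∀ l' ∈ v.toList.head?, l.1 ≠ l'.1) :
    (u.append v h).prod = u.prod * v.prod := by
  simp [append, prod]

section Group

variable {G : ι → Type*} [∀ i, Group (G i)]

def inv (w : Word G) : Word G where
  toList := (w.toList.map fun l => ⟨l.1, l.2⁻¹⟩).reverse
  ne_one := by
    simp only [List.mem_reverse, List.mem_map]
    rintro _ ⟨l, hl, rfl⟩
    exact inv_ne_one.2 (w.ne_one l hl)
  chain_ne := by
    rw [List.isChain_reverse, List.isChain_map]
    exact w.chain_ne.imp fun _ _ => Ne.symm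

theorem prod_inv (w : Word G) : w.inv.prod = w.prod⁻¹ := by
  simp [inv, prod, List.prod_inv_reverse, Function.comp_def]

theorem getLast?_inv (w : Word G) :
    w.inv.toList.getLast? = w.toList.head?.map fun l => ⟨l.1, l.2⁻¹⟩ := by
  simp [inv, List.getLast?_reverse, List.head?_map]

theorem eq_empty_of_inv_mul_of_mul_eq_of (w : Word G) {j : ι} {a b : G j}
    (hw : w.fstIdx ≠ some j) (ha : a ≠ 1) (h : w.prod⁻¹ * of a * w.prod = of b) :
    w = empty := by
  classical
  have hb : b ≠ 1 := by
    rintro rfl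
    exact ha (of_injective j (by simpa [mul_assoc, inv_mul_eq_one] using h))
  -- `w⁻¹ a w` is represented by the reduced word `w.inv ++ a :: w` but also by the word `b`.
  have hlast : ∀ l ∈ w.inv.toList.getLast?, ∀ l' ∈ (cons a w hw ha).toList.head?,
      l.1 ≠ l'.1 := by
    simp only [getLast?_inv, cons_toList, List.head?_cons, Option.mem_def,
      Option.map_eq_some_iff, Option.some.injEq]
    rintro _ ⟨l, hl, rfl⟩ _ rfl
    exact fun e => (fstIdx_ne_iff.1 hw l hl) e.symm
  have hW : w.inv.append (cons a w hw ha) hlast = cons b empty (by simp [fstIdx]) hb :=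
    prod_injective (by simp [prod_append, prod_inv, ← mul_assoc, h])
  have hlen := congrArg (fun W : Word G => W.toList.length) hW
  simp only [append, inv, cons_toList, empty_toList, List.length_append, List.length_reverse,
    List.length_map, List.length_cons, List.length_nil] at hlen
  exact Word.ext (List.length_eq_zero_iff.1 (by omega))

end Group

end Monoid.CoprodI.Word

namespace Monoid.CoprodI

variable {ι : Type*} {G : ι → Type*} [∀ i, Group (G i)]

theorem mem_range_of_of_mul_of_mul_inv_eq_of {x : CoprodI G} {j : ι} {a b : G j} (ha : a ≠ 1)
    (h : x * of a * x⁻¹ = of b) : x ∈ (of : G j →* CoprodI G).range := by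
  classical
  set p := Word.equivPair j (Word.equiv x⁻¹)
  have hx : x⁻¹ = of p.head * p.tail.prod := by
    rw [← Word.prod_rcons, ← Word.equivPair_symm, Equiv.symm_apply_apply]
    exact (Word.equiv.left_inv x⁻¹).symm
  have hconj : p.tail.prod⁻¹ * of (p.head⁻¹ * a * p.head) * p.tail.prod = of b := by
    rw [← h, inv_eq_iff_eq_inv.1 hx]
    simp [mul_assoc]
  have htail := Word.eq_empty_of_inv_mul_of_mul_eq_of p.tail p.fstIdx_ne
    (by rwa [Ne, mul_assoc, inv_mul_eq_one, eq_comm, mul_eq_right]) hconj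
  exact ⟨p.head⁻¹, by rw [map_inv, ← inv_inj, inv_inv, hx, htail, Word.prod_empty, mul_one]⟩

end Monoid.CoprodI

namespace Monoid.Coprod

variable {G₁ : Type u} {G₂ : Type v} [Group G₁] [Group G₂]

-- `Coprod` has no reduced-word API, so we embed it into the `Bool`-indexed `CoprodI`; the
-- `ULift`s are needed because `G₁` and `G₂` may live in different universes.
abbrev ULiftPair (M : Type u) (N : Type v) : Bool → Type max u v :=
  fun b => cond b (ULift.{v} M) (ULift.{u} N)

instance : ∀ b, Group (ULiftPair G₁ G₂ b)
  | true => inferInstanceAs (Group (ULift G₁))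
  | false => inferInstanceAs (Group (ULift G₂))

def toCoprodI : Coprod G₁ G₂ →* CoprodI (ULiftPair G₁ G₂) :=
  lift ((CoprodI.of (i := true)).comp MulEquiv.ulift.symm.toMonoidHom)
    ((CoprodI.of (i := false)).comp MulEquiv.ulift.symm.toMonoidHom)

def ofCoprodI : CoprodI (ULiftPair G₁ G₂) →* Coprod G₁ G₂ :=
  CoprodI.lift fun
    | true => inl.comp MulEquiv.ulift.toMonoidHom
    | false => inr.comp MulEquiv.ulift.toMonoidHom

theorem toCoprodI_inl (x : G₁) :
    toCoprodI (G₂ := G₂) (inl x) = CoprodI.of (i := true) (ULift.up x) :=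
  lift_apply_inl _ _ _

theorem ofCoprodI_toCoprodI (x : Coprod G₁ G₂) : ofCoprodI (toCoprodI x) = x := by
  have : ofCoprodI.comp toCoprodI = MonoidHom.id (Coprod G₁ G₂) := by
    ext <;> simp [toCoprodI, ofCoprodI]
  exact DFunLike.congr_fun this x

theorem toCoprodI_injective : Function.Injective (toCoprodI (G₁ := G₁) (G₂ := G₂)) :=
  Function.LeftInverse.injective ofCoprodI_toCoprodI

theorem mem_range_inl_of_mul_inl_mul_inv_eq_inl {g : Coprod G₁ G₂} {a b : G₁} (ha : a ≠ 1)
    (h : g * inl a * g⁻¹ = inl b) : g ∈ (inl : G₁ →* Coprod G₁ G₂).range := by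
  have hconj : toCoprodI g * CoprodI.of (i := true) (ULift.up a) * (toCoprodI g)⁻¹ =
      CoprodI.of (i := true) (ULift.up b) := by
    rw [← toCoprodI_inl, ← toCoprodI_inl, ← map_inv, ← map_mul, ← map_mul, h]
  obtain ⟨c, hc⟩ := CoprodI.mem_range_of_of_mul_of_mul_inv_eq_of
    (fun e => ha (congrArg ULift.down e)) hconj
  exact ⟨c.down, toCoprodI_injective (by rw [toCoprodI_inl, ← hc]; rfl)⟩

end Monoid.Coprod

/-- If H is malnormal in G₁, then H is malnormal in the free product G₁ ∗ G₂. -/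
theorem stmt_2 {G₁ G₂ : Type*} [Group G₁] [Group G₂] (H : Subgroup G₁)
    (hmal : ∀ g : G₁, g ∉ H → ∀ h ∈ H, g * h * g⁻¹ ∈ H → h = 1) :
    ∀ g : Coprod G₁ G₂, g ∉ H.map (Coprod.inl : G₁ →* Coprod G₁ G₂) →
      ∀ h ∈ H.map (Coprod.inl : G₁ →* Coprod G₁ G₂),
        g * h * g⁻¹ ∈ H.map (Coprod.inl : G₁ →* Coprod G₁ G₂) → h = 1 := by
  rintro g hg _ ⟨h, hh, rfl⟩ ⟨b, hb, hconj⟩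
  rcases eq_or_ne h 1 with rfl | h1
  · exact map_one _
  obtain ⟨c, rfl⟩ := Coprod.mem_range_inl_of_mul_inl_mul_inv_eq_inl h1 hconj.symm
  have hc : c ∉ H := fun hc => hg ⟨c, hc, rfl⟩
  have hb' : c * h * c⁻¹ = b :=
    Coprod.inl_injective (N := G₂) (by rw [map_mul, map_mul, map_inv, hconj])
  exact absurd (hmal c hc h hh (hb' ▸ hb)) h1
end

section
/- Let F be the free group on two generators a, b, and let H = ⟨a⟩ be the cyclic subgroup generated by a. Then H is malnormal in F: for every g ∈ F \ H, H ∩ gHg⁻¹ = {1}. -/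
/-!
Write `g = u * aᵏ` where the reduced word of `u` does not end in `a^±1`. Then
`g aⁿ g⁻¹ = u aⁿ u⁻¹`, and for `n ≠ 0` the concatenation `u · aⁿ · u⁻¹` of reduced words is
already reduced, so it contains every letter of `u`. An element of `⟨a⟩` has only the letters
`a^±1` in its reduced word, which forces `u = 1`, i.e. `g ∈ ⟨a⟩`.
-/

namespace FreeGroup

variable {α : Type*} {a : α}

theorem isReduced_append {L₁ L₂ : List (α × Bool)} (h₁ : IsReduced L₁) (h₂ : IsReduced L₂)
    (h : ∀ x ∈ L₁.getLast?, ∀ y ∈ L₂.head?, x.1 ≠ y.1) : IsReduced (L₁ ++ L₂) :=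
  List.isChain_append.2 ⟨h₁, h₂, fun x hx y hy hxy => absurd hxy (h x hx y hy)⟩

theorem mk_mem_zpowers_of {L : List (α × Bool)} (h : ∀ x ∈ L, x.1 = a) :
    mk L ∈ Subgroup.zpowers (of a) := by
  induction L with
  | nil => exact Subgroup.one_mem _
  | cons x L ih =>
    obtain ⟨b, s⟩ := x
    obtain rfl : b = a := h _ List.mem_cons_self
    rw [← List.singleton_append, ← mul_mk]
    refine Subgroup.mul_mem _ ?_ (ih fun y hy => h y (List.mem_cons_of_mem _ hy))
    cases s
    · exact Subgroup.inv_mem _ (Subgroup.mem_zpowers _)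
    · exact Subgroup.mem_zpowers _

variable [DecidableEq α]

theorem toWord_mul_of_isReduced {x y : FreeGroup α} (h : IsReduced (x.toWord ++ y.toWord)) :
    (x * y).toWord = x.toWord ++ y.toWord := by
  rw [toWord_mul, h.reduce_eq]

theorem mem_zpowers_of_iff {x : FreeGroup α} :
    x ∈ Subgroup.zpowers (of a) ↔ ∀ y ∈ x.toWord, y.1 = a := by
  refine ⟨fun h => ?_, fun h => mk_toWord (x := x) ▸ mk_mem_zpowers_of h⟩
  obtain ⟨n, rfl⟩ := Subgroup.mem_zpowers_iff.1 h
  rcases Int.eq_nat_or_neg n with ⟨k, rfl | rfl⟩ <;> simp [invRev, List.mem_replicate]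

theorem exists_eq_mul_zpowers_of (g : FreeGroup α) :
    ∃ u k, g = u * k ∧ k ∈ Subgroup.zpowers (of a) ∧ ∀ x ∈ u.toWord.getLast?, x.1 ≠ a := by
  set p : α × Bool → Bool := fun x => x.1 = a
  refine ⟨mk (g.toWord.rdropWhile p), mk (g.toWord.rtakeWhile p), ?_, ?_, ?_⟩
  · rw [mul_mk, List.rdropWhile_append_rtakeWhile, mk_toWord]
  · refine mk_mem_zpowers_of fun x hx => ?_
    simpa [p] using List.rtakeWhile_eq_self_iff.1 (List.rtakeWhile_idempotent p _) x hx
  · rw [toWord_mk, (isReduced_toWord.infix (List.rdropWhile_prefix p _).isInfix).reduce_eq]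
    intro x hx
    obtain ⟨hne, rfl⟩ := List.mem_getLast?_eq_getLast hx
    simpa [p] using List.rdropWhile_last_not p _ hne

theorem toWord_conj_of_mem_zpowers {u k : FreeGroup α} (hu : ∀ x ∈ u.toWord.getLast?, x.1 ≠ a)
    (hk : k ∈ Subgroup.zpowers (of a)) (hk₁ : k ≠ 1) :
    (u * k * u⁻¹).toWord = u.toWord ++ k.toWord ++ u⁻¹.toWord := by
  have hk' := mem_zpowers_of_iff.1 hk
  have huk : (u * k).toWord = u.toWord ++ k.toWord := by
    refine toWord_mul_of_isReduced (isReduced_append isReduced_toWord isReduced_toWord ?_)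
    intro x hx y hy
    rw [hk' y (List.mem_of_mem_head? hy)]
    exact hu x hx
  have hred : IsReduced ((u * k).toWord ++ u⁻¹.toWord) := by
    refine isReduced_append isReduced_toWord isReduced_toWord fun x hx y hy => ?_
    rw [huk, List.getLast?_append_of_ne_nil _ (by simpa using hk₁)] at hx
    rw [hk' x (List.mem_of_getLast? hx)]
    simp only [toWord_inv, invRev, List.head?_reverse, List.getLast?_map, Option.mem_def,
      Option.map_eq_some_iff] at hy
    obtain ⟨z, hz, rfl⟩ := hy
    exact fun h => hu z hz h.symm
  rw [toWord_mul_of_isReduced hred, huk]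

theorem eq_one_of_conj_mem_zpowers {u k : FreeGroup α} (hu : ∀ x ∈ u.toWord.getLast?, x.1 ≠ a)
    (hk : k ∈ Subgroup.zpowers (of a)) (hk₁ : k ≠ 1)
    (h : u * k * u⁻¹ ∈ Subgroup.zpowers (of a)) : u = 1 := by
  rw [← toWord_eq_nil_iff, ← List.getLast?_eq_none_iff]
  refine Option.eq_none_iff_forall_ne_some.2 fun x hx => hu x hx ?_
  refine mem_zpowers_of_iff.1 h x ?_
  rw [toWord_conj_of_mem_zpowers hu hk hk₁]
  exact List.mem_append_left _ (List.mem_append_left _ (List.mem_of_getLast? hx))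

theorem mem_zpowers_of_of_conj_zpow_mem {g : FreeGroup α} {n : ℤ} (hn : n ≠ 0)
    (h : g * of a ^ n * g⁻¹ ∈ Subgroup.zpowers (of a)) : g ∈ Subgroup.zpowers (of a) := by
  obtain ⟨u, k, rfl, hk, hu⟩ := exists_eq_mul_zpowers_of (a := a) g
  obtain ⟨m, rfl⟩ := Subgroup.mem_zpowers_iff.1 hk
  have hconj : u * of a ^ m * of a ^ n * (u * of a ^ m)⁻¹ = u * of a ^ n * u⁻¹ := by group
  have hn₁ : of a ^ n ≠ 1 := by simp [IsMulTorsionFree.zpow_eq_one_iff, hn]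
  rw [eq_one_of_conj_mem_zpowers hu (Subgroup.zpow_mem_zpowers _ n) hn₁ (hconj ▸ h), one_mul]
  exact hk

end FreeGroup

/-- The cyclic subgroup generated by a generator `a` of the free group on two
generators is malnormal: if `g ∉ ⟨a⟩` then `g aⁿ g⁻¹ ∈ ⟨a⟩` forces `n = 0`. -/
theorem stmt_4 (g : FreeGroup Bool) (hg : g ∉ Subgroup.zpowers (FreeGroup.of true)) :
    ∀ n : ℤ, g * (FreeGroup.of true) ^ n * g⁻¹ ∈ Subgroup.zpowers (FreeGroup.of true) →
      n = 0 := fun _ h => by_contra fun hn => hg (FreeGroup.mem_zpowers_of_of_conj_zpow_mem hn h)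
end

section
/- Let G be a group, H a subgroup, and suppose for every g ∈ G \ H the set {h ∈ H : ghg⁻¹ ∈ H} is finite. Then for every finite subset C of G \ H, the set {h ∈ H : ∃ g₁ g₂ ∈ C, g₁hg₂ ∈ H} is finite. -/
/-- Almost malnormality implies condition (ST): if `{h ∈ H : ghg⁻¹ ∈ H}` is finite for
every `g ∈ G \ H`, then for every finite `C ⊆ G \ H` the set
`{h ∈ H : ∃ g₁, g₂ ∈ C, g₁hg₂ ∈ H}` is finite. -/
theorem stmt_16 {G : Type*} [Group G] (H : Subgroup G)
    (hmal : ∀ g : G, g ∉ H → {h : G | h ∈ H ∧ g * h * g⁻¹ ∈ H}.Finite) :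
    ∀ C : Finset G, (↑C : Set G) ⊆ {g : G | g ∉ H} →
      {h : G | h ∈ H ∧ ∃ g₁ ∈ C, ∃ g₂ ∈ C, g₁ * h * g₂ ∈ H}.Finite := by
  intro C hC
  have key : ∀ g₁ ∈ C, ∀ g₂ ∈ C, {h : G | h ∈ H ∧ g₁ * h * g₂ ∈ H}.Finite := by
    intro g₁ hg₁ g₂ hg₂
    by_cases hne : {h : G | h ∈ H ∧ g₁ * h * g₂ ∈ H}.Nonempty
    · obtain ⟨h₀, hh₀, hk₀⟩ := hne
      have hfin := hmal g₁ (hC hg₁)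
      have hsub : {h : G | h ∈ H ∧ g₁ * h * g₂ ∈ H} ⊆
          (fun x => x * h₀) '' {h : G | h ∈ H ∧ g₁ * h * g₁⁻¹ ∈ H} := by
        rintro h ⟨hh, hk⟩
        refine ⟨h * h₀⁻¹, ⟨H.mul_mem hh (H.inv_mem hh₀), ?_⟩, by group⟩
        have heq : g₁ * (h * h₀⁻¹) * g₁⁻¹ = (g₁ * h * g₂) * (g₁ * h₀ * g₂)⁻¹ := by group
        rw [heq]
        exact H.mul_mem hk (H.inv_mem hk₀)
      exact (hfin.image _).subset hsub
    · rw [Set.not_nonempty_iff_eq_empty] at hne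
      rw [hne]; exact Set.finite_empty
  have hsub : {h : G | h ∈ H ∧ ∃ g₁ ∈ C, ∃ g₂ ∈ C, g₁ * h * g₂ ∈ H} ⊆
      ⋃ g₁ ∈ C, ⋃ g₂ ∈ C, {h : G | h ∈ H ∧ g₁ * h * g₂ ∈ H} := by
    rintro h ⟨hh, g₁, hg₁, g₂, hg₂, hk⟩
    exact Set.mem_biUnion hg₁ (Set.mem_biUnion hg₂ ⟨hh, hk⟩)
  exact Set.Finite.subset
    (Set.Finite.biUnion C.finite_toSet fun g₁ hg₁ =>
      Set.Finite.biUnion C.finite_toSet fun g₂ hg₂ => key g₁ hg₁ g₂ hg₂) hsub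
end
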